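/- If x ∈ ℂⁿ is a unit eigenvector of A_μ = √M A √M with eigenvalue λ/N, then y = V x is a unit eigenvector of the model matrix W = D A Dᵀ with eigenvalue λ. -/

import Mathlib

open scoped BigOperators ComplexConjugate
open Matrix

/-!
The columns of the block indicator matrix `D` are indicators of disjoint blocks of sizes `k i`,
so `Dᴴ D = diag k = Sᴴ S` for the diagonal matrix `S = √N √M`. Hence `V = D S⁻¹` is an
isometry, and `W V = D A Dᴴ D S⁻¹ = V (S A Sᴴ) = N • V A_μ`: `V` maps
`(λ/N)`-eigenvectors of `A_μ` to `λ`-eigenvectors of `W`, preserving their norm.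
-/

/-- The `N × n` block indicator matrix, over `ℂ`. -/
def blockD (N n : ℕ) (k : Fin n → ℕ) : Matrix (Fin N) (Fin n) ℂ :=
  Matrix.of fun r j =>
    if (∑ i : Fin n, if (i : ℕ) < (j : ℕ) then k i else 0) ≤ (r : ℕ) ∧
        (r : ℕ) < (∑ i : Fin n, if (i : ℕ) < (j : ℕ) then k i else 0) + k j
    then 1 else 0

section blockStart
variable {n : ℕ} (k : Fin n → ℕ)

def blockStart (j : ℕ) : ℕ := ∑ i : Fin n, if (i : ℕ) < j then k i else 0

theorem blockStart_mono : Monotone (blockStart k) := fun _ _ hab =>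
  Finset.sum_le_sum fun i _ => by split_ifs <;> omega

theorem blockStart_succ (j : Fin n) : blockStart k (j + 1) = blockStart k j + k j := by
  rw [blockStart, blockStart, ← Finset.add_sum_erase _ _ (Finset.mem_univ j),
    ← Finset.add_sum_erase _ _ (Finset.mem_univ j), if_pos j.val.lt_succ_self,
    if_neg (lt_irrefl _), zero_add, add_comm]
  congr 1
  refine Finset.sum_congr rfl fun i hi => ?_
  have : (i : ℕ) ≠ j := Fin.val_ne_of_ne (Finset.ne_of_mem_erase hi)
  by_cases h : (i : ℕ) < j
  · rw [if_pos h, if_pos (by omega)]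
  · rw [if_neg h, if_neg (by omega)]

theorem blockStart_le_sum (j : ℕ) : blockStart k j ≤ ∑ i, k i :=
  Finset.sum_le_sum fun i _ => by split_ifs <;> omega

end blockStart

theorem blockD_apply (N n : ℕ) (k : Fin n → ℕ) (r : Fin N) (j : Fin n) :
    blockD N n k r j = if (r : ℕ) ∈ Finset.Ico (blockStart k j) (blockStart k (j + 1))
      then 1 else 0 := by
  simp only [blockD, of_apply, Finset.mem_Ico, blockStart_succ]; rfl

theorem Fin.sum_ite_val_mem_eq_card {R : Type*} [Semiring R] {N : ℕ} {s : Finset ℕ}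
    (hs : s ⊆ Finset.range N) :
    ∑ r : Fin N, (if (r : ℕ) ∈ s then (1 : R) else 0) = s.card := by
  rw [Fin.sum_univ_eq_sum_range (fun r => if r ∈ s then (1 : R) else 0), Finset.sum_boole,
    Finset.filter_mem_eq_inter, Finset.inter_eq_right.2 hs]

theorem blockD_conjTranspose_mul_self {N n : ℕ} {k : Fin n → ℕ} (hk : ∑ i, k i = N) :
    (blockD N n k)ᴴ * blockD N n k = diagonal fun i => (k i : ℂ) := by
  ext i j
  simp only [mul_apply, conjTranspose_apply, blockD_apply, apply_ite star, star_one, star_zero,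
    mul_ite, mul_one, mul_zero, ← ite_and, ← Finset.mem_inter, Finset.Ico_inter_Ico]
  have hN := hk ▸ blockStart_le_sum k (i + 1)
  rw [Fin.sum_ite_val_mem_eq_card fun r hr => Finset.mem_range.2 <|
    (Finset.mem_Ico.1 hr).2.trans_le <| (min_le_right _ _).trans hN, Nat.card_Ico]
  rcases eq_or_ne i j with rfl | hij
  · rw [max_self, min_self, blockStart_succ, Nat.add_sub_cancel_left, diagonal_apply_eq]
  have hdisj :
      blockStart k (i + 1) ≤ blockStart k j ∨ blockStart k (j + 1) ≤ blockStart k i :=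
    (Fin.val_ne_of_ne hij).lt_or_gt.imp (blockStart_mono k ·) (blockStart_mono k ·)
  rw [diagonal_apply_ne _ hij, Nat.cast_eq_zero]
  omega

theorem blockD_conjTranspose (N n : ℕ) (k : Fin n → ℕ) :
    (blockD N n k)ᴴ = (blockD N n k)ᵀ := by
  ext r j
  simp only [conjTranspose_apply, transpose_apply, blockD_apply]
  split_ifs <;> simp

section isometry
variable {m n R : Type*} [Fintype m] [Fintype n]

theorem star_mulVec_dotProduct_mulVec [CommSemiring R] [StarRing R] (V : Matrix m n R)
    (x : n → R) : star (V *ᵥ x) ⬝ᵥ (V *ᵥ x) = star x ⬝ᵥ ((Vᴴ * V) *ᵥ x) := by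
  rw [star_mulVec, dotProduct_mulVec, vecMul_vecMul, ← dotProduct_mulVec]

theorem mulVec_mulVec_eq_smul_of_mul_eq_mul [CommSemiring R] {W : Matrix m m R}
    {V : Matrix m n R} {B : Matrix n n R} (hWV : W * V = V * B) {x : n → R} {a : R}
    (hx : B *ᵥ x = a • x) : W *ᵥ (V *ᵥ x) = a • (V *ᵥ x) := by
  rw [mulVec_mulVec, hWV, ← mulVec_mulVec, hx, mulVec_smul]

variable [DecidableEq n] [CommRing R] [StarRing R] {D : Matrix m n R} {S T : Matrix n n R}

theorem conjTranspose_mul_self_of_mul_eq_one (hST : S * T = 1) (hD : Dᴴ * D = Sᴴ * S) :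
    (D * T)ᴴ * (D * T) = 1 := by
  rw [conjTranspose_mul, Matrix.mul_assoc, ← Matrix.mul_assoc Dᴴ, hD, Matrix.mul_assoc,
    hST, Matrix.mul_one, ← conjTranspose_mul, hST, conjTranspose_one]

theorem mul_mul_conjTranspose_mul_of_mul_eq_one (hST : S * T = 1) (hD : Dᴴ * D = Sᴴ * S)
    (B : Matrix n n R) : D * B * Dᴴ * (D * T) = D * T * (S * B * Sᴴ) := by
  rw [Matrix.mul_assoc (D * B), ← Matrix.mul_assoc Dᴴ, hD, Matrix.mul_assoc,
    Matrix.mul_assoc Sᴴ, hST, Matrix.mul_one, Matrix.mul_assoc D, ← Matrix.mul_assoc T,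
    ← Matrix.mul_assoc T, mul_eq_one_comm.1 hST, Matrix.one_mul]

end isometry

section sqrtScaling
variable {ι : Type*} [DecidableEq ι] (c : ℝ) (d : ι → ℝ)

noncomputable def sqrtScaling : Matrix ι ι ℂ :=
  (Real.sqrt c : ℂ) • diagonal fun i => (Real.sqrt (d i) : ℂ)

theorem sqrtScaling_conjTranspose : (sqrtScaling c d)ᴴ = sqrtScaling c d := by
  simp [sqrtScaling, diagonal_conjTranspose, Pi.star_def, Complex.conj_ofReal]

variable {c d} [Fintype ι]

theorem sqrtScaling_mul_inv (hc : 0 < c) (hd : ∀ i, 0 < d i) :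
    sqrtScaling c d *
      ((Real.sqrt c : ℂ)⁻¹ • diagonal fun i => ((Real.sqrt (d i))⁻¹ : ℂ)) = 1 := by
  have hsqrt {t : ℝ} (ht : 0 < t) : (Real.sqrt t : ℂ) ≠ 0 :=
    Complex.ofReal_ne_zero.2 (Real.sqrt_ne_zero'.2 ht)
  rw [sqrtScaling, smul_mul_smul_comm, mul_inv_cancel₀ (hsqrt hc), one_smul,
    diagonal_mul_diagonal, ← diagonal_one]
  exact congrArg diagonal (funext fun i => mul_inv_cancel₀ (hsqrt (hd i)))

theorem sqrtScaling_conjTranspose_mul_self (hc : 0 ≤ c) (hd : ∀ i, 0 ≤ d i) :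
    (sqrtScaling c d)ᴴ * sqrtScaling c d = diagonal fun i => ((c * d i : ℝ) : ℂ) := by
  rw [sqrtScaling_conjTranspose, sqrtScaling, smul_mul_smul_comm, ← Complex.ofReal_mul,
    Real.mul_self_sqrt hc, diagonal_mul_diagonal, ← diagonal_smul]
  refine congrArg diagonal (funext fun i => ?_)
  rw [Pi.smul_apply, ← Complex.ofReal_mul, Real.mul_self_sqrt (hd i), smul_eq_mul,
    Complex.ofReal_mul]

theorem sqrtScaling_mul_mul_conjTranspose (hc : 0 ≤ c) (B : Matrix ι ι ℂ) :
    sqrtScaling c d * B * (sqrtScaling c d)ᴴ =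
      (c : ℂ) • ((diagonal fun i => (Real.sqrt (d i) : ℂ)) * B *
        diagonal fun i => (Real.sqrt (d i) : ℂ)) := by
  rw [sqrtScaling_conjTranspose, sqrtScaling, Matrix.smul_mul, Matrix.smul_mul, Matrix.mul_smul,
    smul_smul, ← Complex.ofReal_mul, Real.mul_self_sqrt hc]

end sqrtScaling

theorem eigvec_Amu_to_eigvec_W_general (N n : ℕ) (hN : 0 < N)
    (μ : Fin n → ℝ) (hμpos : ∀ i, 0 < μ i)
    (k : Fin n → ℕ)
    (hk : ∀ i, (k i : ℝ) = μ i * N) (hksum : ∑ i, k i = N)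
    (A : Matrix (Fin n) (Fin n) ℝ)
    (W : Matrix (Fin N) (Fin N) ℂ)
    (hW : W = blockD N n k * A.map (Complex.ofReal) * (blockD N n k)ᵀ)
    (Aμ : Matrix (Fin n) (Fin n) ℂ)
    (hAμ : Aμ = Matrix.diagonal (fun i => (Real.sqrt (μ i) : ℂ)) * A.map (Complex.ofReal) *
        Matrix.diagonal (fun i => (Real.sqrt (μ i) : ℂ)))
    (V : Matrix (Fin N) (Fin n) ℂ)
    (hV : V = ((Real.sqrt N : ℂ))⁻¹ •
        (blockD N n k * Matrix.diagonal fun i => ((Real.sqrt (μ i))⁻¹ : ℂ)))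
    (lam : ℝ)
    (x : Fin n → ℂ) (hx_unit : star x ⬝ᵥ x = 1)
    (hx_eig : Aμ.mulVec x = ((lam / N : ℝ) : ℂ) • x) :
    star (V.mulVec x) ⬝ᵥ (V.mulVec x) = 1 ∧
      W.mulVec (V.mulVec x) = (lam : ℂ) • (V.mulVec x) := by
  have hN' : (0 : ℝ) < N := Nat.cast_pos.2 hN
  have hD : (blockD N n k)ᴴ * blockD N n k = (sqrtScaling N μ)ᴴ * sqrtScaling N μ := by
    rw [blockD_conjTranspose_mul_self hksum,
      sqrtScaling_conjTranspose_mul_self hN'.le fun i => (hμpos i).le]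
    exact congrArg diagonal (funext fun i => by rw [mul_comm, ← hk, Complex.ofReal_natCast])
  have hST := sqrtScaling_mul_inv hN' hμpos
  rw [← Matrix.mul_smul] at hV
  subst hV
  refine ⟨?_, mulVec_mulVec_eq_smul_of_mul_eq_mul (B := (N : ℂ) • Aμ) ?_ ?_⟩
  · rw [star_mulVec_dotProduct_mulVec, conjTranspose_mul_self_of_mul_eq_one hST hD, one_mulVec,
      hx_unit]
  · rw [hW, ← blockD_conjTranspose, mul_mul_conjTranspose_mul_of_mul_eq_one hST hD,
      sqrtScaling_mul_mul_conjTranspose hN'.le, hAμ, Complex.ofReal_natCast]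
  · rw [smul_mulVec, hx_eig, smul_smul, ← Complex.ofReal_natCast, ← Complex.ofReal_mul,
      mul_div_cancel₀ _ hN'.ne']

/-- if `x` is a unit `(λ/N)`-eigenvector of `A_μ = √M A √M`, then `y = V x`
is a unit `λ`-eigenvector of the model matrix `W = D A Dᵀ`. -/
theorem eigvec_Amu_to_eigvec_W (N n : ℕ) (hN : 0 < N) (hn : 0 < n)
    (μ : Fin n → ℝ) (hμpos : ∀ i, 0 < μ i) (hμsum : ∑ i, μ i = 1)
    (k : Fin n → ℕ) (hkpos : ∀ i, 0 < k i)
    (hk : ∀ i, (k i : ℝ) = μ i * N) (hksum : ∑ i, k i = N)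
    (A : Matrix (Fin n) (Fin n) ℝ) (hA : A.IsSymm)
    (W : Matrix (Fin N) (Fin N) ℂ)
    (hW : W = blockD N n k * A.map (Complex.ofReal) * (blockD N n k)ᵀ)
    (Aμ : Matrix (Fin n) (Fin n) ℂ)
    (hAμ : Aμ = Matrix.diagonal (fun i => (Real.sqrt (μ i) : ℂ)) * A.map (Complex.ofReal) *
        Matrix.diagonal (fun i => (Real.sqrt (μ i) : ℂ)))
    (V : Matrix (Fin N) (Fin n) ℂ)
    (hV : V = ((Real.sqrt N : ℂ))⁻¹ •
        (blockD N n k * Matrix.diagonal fun i => ((Real.sqrt (μ i))⁻¹ : ℂ)))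
    (lam : ℝ)
    (x : Fin n → ℂ) (hx_unit : star x ⬝ᵥ x = 1)
    (hx_eig : Aμ.mulVec x = ((lam / N : ℝ) : ℂ) • x) :
    star (V.mulVec x) ⬝ᵥ (V.mulVec x) = 1 ∧
      W.mulVec (V.mulVec x) = (lam : ℂ) • (V.mulVec x) :=
  eigvec_Amu_to_eigvec_W_general N n hN μ hμpos k hk hksum A W hW Aμ hAμ V hV lam x hx_unit hx_eig
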